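/- arXiv:0710.1699 — 2 statements merged into one kernel-verified Lean document; each statement's English description precedes it below -/
import Mathlib

section
/- Let (Ω, ≤) be a linear order and f, g ∈ Aut(Ω, ≤) with g ≥ 1 (pointwise). If g⁻¹fg is orthogonal to f (i.e., |g⁻¹fg| ∧ |f| = 1 in the lattice-ordered group Aut(Ω, ≤)), then f^m ≤ g for every integer m. -/
/-!
Evaluated at `g x`, orthogonality of `g⁻¹ f g` and `f` says that `g |f| x` or `|f| (g x)` equals
`g x`, so `f` fixes `x` or `g x`. In the first case `f ^ m x = x ≤ g x`; in the second,
`f ^ m x ≤ f ^ m (g x) = g x`.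
-/

namespace OrderIso

variable {α : Type*}

theorem zpow_apply_eq_self_of_apply_eq_self [LE α] {f : α ≃o α} {x : α} (hx : f x = x) (m : ℤ) :
    (f ^ m) x = x :=
  zpow_mem (show f ∈ MulAction.stabilizer (α ≃o α) x from hx) m

variable [LinearOrder α]

theorem apply_eq_self_of_max_apply_symm_apply_eq {f : α ≃o α} {x : α}
    (hx : max (f x) (f.symm x) = x) : f x = x := by
  refine le_antisymm ((le_max_left _ _).trans_eq hx) ?_
  simpa using f.monotone ((le_max_right _ _).trans_eq hx)

theorem apply_eq_self_or_apply_apply_eq_self_of_min_eq {f g : α ≃o α} {x : α}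
    (h : min (max (g (f x)) (g (f.symm x))) (max (f (g x)) (f.symm (g x))) = g x) :
    f x = x ∨ f (g x) = g x := by
  rw [← g.monotone.map_max] at h
  rcases min_eq_iff.mp h with ⟨hx, -⟩ | ⟨hgx, -⟩
  · exact .inl (apply_eq_self_of_max_apply_symm_apply_eq (g.injective hx))
  · exact .inr (apply_eq_self_of_max_apply_symm_apply_eq hgx)

end OrderIso

/-- Let `f, g` be order-automorphisms of a linear order `Ω` with `g ≥ 1`
pointwise.  If the conjugate of `f` by `g` is orthogonal to `f` (the
pointwise meet of their absolute values is the identity), then `f ^ m ≤ g`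
pointwise for every integer `m`, i.e. `f ≪ g`. -/
theorem stmt_10 (Ω : Type*) [LinearOrder Ω] (f g : Ω ≃o Ω)
    (hg : ∀ x, x ≤ g x)
    (horth : ∀ x : Ω,
      min (max (g (f (g.symm x))) (g (f.symm (g.symm x))))
          (max (f x) (f.symm x)) = x) :
    ∀ m : ℤ, ∀ x, (f ^ m) x ≤ g x := by
  intro m x
  have hfix : f x = x ∨ f (g x) = g x :=
    OrderIso.apply_eq_self_or_apply_apply_eq_self_of_min_eq (by simpa using horth (g x))
  rcases hfix with hx | hgx
  · exact (OrderIso.zpow_apply_eq_self_of_apply_eq_self hx m).symm ▸ hg x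
  · calc (f ^ m) x ≤ (f ^ m) (g x) := (f ^ m).monotone (hg x)
      _ = g x := OrderIso.zpow_apply_eq_self_of_apply_eq_self hgx m
end

section
/- Let f, g ∈ Aut(ℝ, ≤) be strictly positive elements, each having exactly one bump whose supporting interval is bounded above and below in ℝ. Then f and g are conjugate in Aut(ℝ, ≤). More precisely, given α ∈ supp(f), β ∈ supp(g), and any order-preserving bijection h₀: [α, αf] → [β, βg], there exists h ∈ Aut(ℝ, ≤) extending h₀ with h⁻¹fh = g. -/
/-! On its support `(a, b)` a positive one-bump automorphism `F` has no fixed point, so the orbit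
of `α ∈ (a, b)` runs from `a` to `b` (a bounded monotone orbit would converge to a fixed point).
Hence the translates `Fⁿ [α, F α)` tile `(a, b)`, i.e. `(n, t) ↦ Fⁿ t` is an order isomorphism
`ℤ ×ₗ [α, F α) ≃o (a, b)`. Transporting `h₀` through these charts for `f` and `g` conjugates `f`
to `g` on the supports; outside the supports both are the identity, so any order isomorphism
between the complementary rays (here translations) completes the conjugacy. -/

open Set

section Preorder

variable {X : Type*} [Preorder X] {F : X ≃o X} {α x a b : X}

theorem OrderIso.coe_pow (F : X ≃o X) (n : ℕ) : ⇑(F ^ n) = (⇑F)^[n] := by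
  induction n with
  | zero => rfl
  | succ n ih => rw [pow_succ', Function.iterate_succ', ← ih]; rfl

theorem OrderIso.zpow_add_one_apply (F : X ≃o X) (n : ℤ) (x : X) :
    (F ^ (n + 1)) x = (F ^ n) (F x) := by
  rw [zpow_add_one]; rfl

theorem OrderIso.zpow_add_one_apply' (F : X ≃o X) (n : ℤ) (x : X) :
    (F ^ (n + 1)) x = F ((F ^ n) x) := by
  rw [add_comm, zpow_one_add]; rfl

theorem OrderIso.zpow_apply_ne_self_iff (F : X ≃o X) (n : ℤ) (x : X) :
    F ((F ^ n) x) ≠ (F ^ n) x ↔ F x ≠ x := by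
  rw [show F ((F ^ n) x) = (F ^ n) (F x) from congrArg (· x) (Commute.self_zpow F n).eq,
    (F ^ n).injective.ne_iff]

theorem OrderIso.zpow_apply_mem_Ioo (hS : {x | F x ≠ x} = Ioo a b) (n : ℤ)
    (hx : x ∈ Ioo a b) : (F ^ n) x ∈ Ioo a b :=
  (Set.ext_iff.1 hS _).1 ((F.zpow_apply_ne_self_iff n x).2 ((Set.ext_iff.1 hS x).2 hx))

theorem OrderIso.apply_eq_self_of_notMem_Ioo (hS : {x | F x ≠ x} = Ioo a b)
    (hx : x ∉ Ioo a b) : F x = x :=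
  not_not.1 fun h => hx ((Set.ext_iff.1 hS x).1 h)

theorem OrderIso.strictMono_zpow_apply (hα : α < F α) : StrictMono fun n : ℤ => (F ^ n) α :=
  strictMono_int_of_lt_succ fun n => by
    simpa only [F.zpow_add_one_apply] using (F ^ n).strictMono hα

def orbitLex (F : X ≃o X) (α : X) (p : ℤ ×ₗ Ico α (F α)) : X :=
  (F ^ (ofLex p).1) (ofLex p).2

theorem orbitLex_strictMono (hα : α < F α) : StrictMono (orbitLex F α) := by
  intro p q hpq
  rcases Prod.Lex.lt_iff.1 hpq with hlt | ⟨heq, hlt⟩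
  · calc orbitLex F α p < (F ^ (ofLex p).1) (F α) := (F ^ _).strictMono (ofLex p).2.2.2
      _ = (F ^ ((ofLex p).1 + 1)) α := (F.zpow_add_one_apply _ _).symm
      _ ≤ (F ^ (ofLex q).1) α :=
        (F.strictMono_zpow_apply hα).monotone (Int.add_one_le_of_lt hlt)
      _ ≤ orbitLex F α q := (F ^ _).monotone (ofLex q).2.2.1
  · rw [orbitLex, orbitLex, heq]
    exact (F ^ _).strictMono hlt

end Preorder

section LinearOrder

variable {X : Type*} [LinearOrder X] {F : X ≃o X} {α x : X}

theorem le_or_mem_Ioo_or_ge (a b x : X) : x ≤ a ∨ x ∈ Ioo a b ∨ b ≤ x := by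
  by_cases ha : x ≤ a
  · exact .inl ha
  · by_cases hb : b ≤ x
    · exact .inr (.inr hb)
    · exact .inr (.inl ⟨not_le.1 ha, not_le.1 hb⟩)

theorem mem_range_orbitLex_iff (hα : α < F α) :
    x ∈ range (orbitLex F α) ↔ ∃ m n : ℤ, (F ^ m) α ≤ x ∧ x < (F ^ n) α := by
  constructor
  · rintro ⟨p, rfl⟩
    refine ⟨(ofLex p).1, (ofLex p).1 + 1, (F ^ _).monotone (ofLex p).2.2.1, ?_⟩
    rw [F.zpow_add_one_apply]
    exact (F ^ _).strictMono (ofLex p).2.2.2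
  · rintro ⟨m, n, hm, hn⟩
    have hbdd : ∀ k : ℤ, (F ^ k) α ≤ x → k ≤ n := fun k hk =>
      ((F.strictMono_zpow_apply hα).lt_iff_lt.1 (hk.trans_lt hn)).le
    obtain ⟨k, hk, hmax⟩ := Int.exists_greatest_of_bdd ⟨n, hbdd⟩ ⟨m, hm⟩
    have hk1 : x < (F ^ k) (F α) := by
      rw [← F.zpow_add_one_apply]
      exact lt_of_not_ge fun h => (hmax _ h).not_gt (lt_add_one k)
    exact ⟨toLex (k, ⟨(F ^ k).symm x, (F ^ k).le_symm_apply.2 hk, (F ^ k).symm_apply_lt.2 hk1⟩),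
      (F ^ k).apply_symm_apply x⟩

theorem exists_orderIso_conj_of_range_orbitLex {Y : Type*} [LinearOrder Y] {G : Y ≃o Y}
    {β : Y} (hα : α < F α) (hβ : β < G β) (h₀ : Ico α (F α) ≃o Ico β (G β)) {s : Set X}
    {t : Set Y} (hs : range (orbitLex F α) = s) (ht : range (orbitLex G β) = t) :
    ∃ e : s ≃o t, (∀ (x : s) (hx : F x ∈ s), (e ⟨F x, hx⟩ : Y) = G (e x)) ∧
      ∀ (u : Ico α (F α)) (hu : (u : X) ∈ s), (e ⟨u, hu⟩ : Y) = h₀ u := by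
  subst hs ht
  set φ := (orbitLex_strictMono hα).orderIso
  set e := φ.symm.trans
    ((Prod.Lex.prodLexCongr (.refl ℤ) h₀).trans (orbitLex_strictMono hβ).orderIso)
  have he : ∀ p, (e (φ p) : Y) = orbitLex G β (toLex ((ofLex p).1, h₀ (ofLex p).2)) :=
    fun p => by
      simp only [e, OrderIso.trans_apply, OrderIso.symm_apply_apply]
      rfl
  refine ⟨e, ?_, fun u hu => ?_⟩
  · rintro ⟨_, p, rfl⟩ hx
    have hp : (⟨F (orbitLex F α p), hx⟩ : range (orbitLex F α)) =
        φ (toLex ((ofLex p).1 + 1, (ofLex p).2)) :=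
      Subtype.ext (F.zpow_add_one_apply' _ _).symm
    rw [hp, he]
    exact (G.zpow_add_one_apply' _ _).trans (congrArg G (he p).symm)
  · have hu' : (⟨u, hu⟩ : range (orbitLex F α)) = φ (toLex (0, u)) :=
      Subtype.ext (by simp [φ, orbitLex])
    rw [hu', he]
    simp [orbitLex]

end LinearOrder

section ConditionallyComplete

variable {X : Type*} [ConditionallyCompleteLinearOrder X] {F : X ≃o X} {a b x y : X}

theorem OrderIso.setOf_apply_ne_eq_Ioo (F : X ≃o X) (hne : {x | F x ≠ x}.Nonempty)
    (hc : {x | F x ≠ x}.OrdConnected) (hba : BddAbove {x | F x ≠ x})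
    (hbb : BddBelow {x | F x ≠ x}) :
    {x | F x ≠ x} = Ioo (sInf {x | F x ≠ x}) (sSup {x | F x ≠ x}) := by
  set S := {x | F x ≠ x}
  have happly : ∀ x ∈ S, F x ∈ S := fun _ hx => F.injective.ne hx
  have hsymm : ∀ x ∈ S, F.symm x ∈ S := fun x hx => by
    have := (F.zpow_apply_ne_self_iff (-1) x).2 hx
    rwa [zpow_neg_one] at this
  have hinf : sInf S ∉ S := fun h => h <| le_antisymm
    (F.le_symm_apply.1 (csInf_le hbb (hsymm _ h))) (csInf_le hbb (happly _ h))
  have hsup : sSup S ∉ S := fun h => h <| le_antisymm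
    (le_csSup hba (happly _ h)) (F.symm_apply_le.1 (le_csSup hba (hsymm _ h)))
  refine Subset.antisymm (fun x hx => ⟨(csInf_le hbb hx).lt_of_ne fun h => hinf (h ▸ hx),
    (le_csSup hba hx).lt_of_ne fun h => hsup (h ▸ hx)⟩) fun x hx => ?_
  obtain ⟨u, hu, hux⟩ := exists_lt_of_csInf_lt hne hx.1
  obtain ⟨v, hv, hxv⟩ := exists_lt_of_lt_csSup hne hx.2
  exact hc.out hu hv ⟨hux.le, hxv.le⟩

variable [TopologicalSpace X] [OrderTopology X]

theorem exists_lt_pow_apply_of_forall_Icc_ne (hpos : ∀ z, z ≤ F z)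
    (hfix : ∀ z ∈ Icc x y, F z ≠ z) : ∃ n : ℕ, y < (F ^ n) x := by
  by_contra! h
  simp only [F.coe_pow] at h
  have hmono : Monotone fun n : ℕ => F^[n] x := monotone_nat_of_le_succ fun n => by
    rw [Function.iterate_succ_apply']; exact hpos _
  have hbdd : BddAbove (range fun n : ℕ => F^[n] x) := ⟨y, by rintro _ ⟨n, rfl⟩; exact h n⟩
  exact hfix _ ⟨le_ciSup hbdd 0, ciSup_le h⟩ <|
    isFixedPt_of_tendsto_iterate (tendsto_atTop_ciSup hmono hbdd) F.continuous.continuousAt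

theorem range_orbitLex_eq_Ioo {α : X} (hpos : ∀ z, z ≤ F z) (hS : {x | F x ≠ x} = Ioo a b)
    (hα : α ∈ Ioo a b) : range (orbitLex F α) = Ioo a b := by
  have hfix : ∀ {u v}, u ∈ Ioo a b → v ∈ Ioo a b → ∀ z ∈ Icc u v, F z ≠ z :=
    fun hu hv z hz => (Set.ext_iff.1 hS z).2 ⟨hu.1.trans_le hz.1, hz.2.trans_lt hv.2⟩
  ext x
  rw [mem_range_orbitLex_iff ((hpos α).lt_of_ne (hfix hα hα α ⟨le_rfl, le_rfl⟩).symm)]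
  refine ⟨fun ⟨m, n, hm, hn⟩ => ⟨(F.zpow_apply_mem_Ioo hS m hα).1.trans_le hm,
    hn.trans (F.zpow_apply_mem_Ioo hS n hα).2⟩, fun hx => ?_⟩
  obtain ⟨n, hn⟩ := exists_lt_pow_apply_of_forall_Icc_ne hpos (hfix hα hx)
  obtain ⟨m, hm⟩ := exists_lt_pow_apply_of_forall_Icc_ne hpos (hfix hx hα)
  refine ⟨-m, n, ?_, by rwa [zpow_natCast]⟩
  rw [zpow_neg, zpow_natCast]
  exact (F ^ m).symm_apply_le.2 hm.le

end ConditionallyComplete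

section IccIco

variable {X Y : Type*} [PartialOrder X] [PartialOrder Y] {a b : X} {c d : Y}

theorem OrderIso.Icc_apply_left (e : Icc a b ≃o Icc c d) (hab : a ≤ b) :
    (e ⟨a, left_mem_Icc.2 hab⟩ : Y) = c :=
  congrArg Subtype.val <|
    e.map_bot' (y := ⟨c, le_rfl, (e ⟨a, left_mem_Icc.2 hab⟩).2.1.trans (e _).2.2⟩)
      (fun x => x.2.1) fun y => y.2.1

theorem OrderIso.Icc_apply_right (e : Icc a b ≃o Icc c d) (hab : a ≤ b) :
    (e ⟨b, right_mem_Icc.2 hab⟩ : Y) = d :=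
  congrArg Subtype.val <|
    e.map_top' (y := ⟨d, (e ⟨b, right_mem_Icc.2 hab⟩).2.1.trans (e _).2.2, le_rfl⟩)
      (fun x => x.2.2) fun y => y.2.2

theorem OrderIso.coe_lt_Icc_right_iff (e : Icc a b ≃o Icc c d) (hab : a ≤ b) (t : Icc a b) :
    (t : X) < b ↔ (e t : Y) < d := by
  change t < ⟨b, right_mem_Icc.2 hab⟩ ↔ _
  rw [← e.lt_iff_lt, ← Subtype.coe_lt_coe, e.Icc_apply_right hab]

def OrderIso.restrictIco (e : Icc a b ≃o Icc c d) (hab : a ≤ b) : Ico a b ≃o Ico c d where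
  toFun t := ⟨e ⟨t, Ico_subset_Icc_self t.2⟩, (e _).2.1, (e.coe_lt_Icc_right_iff hab _).1 t.2.2⟩
  invFun s := ⟨e.symm ⟨s, Ico_subset_Icc_self s.2⟩, (e.symm _).2.1,
    (e.coe_lt_Icc_right_iff hab _).2 (by simpa using s.2.2)⟩
  left_inv t := by simp
  right_inv s := by simp
  map_rel_iff' := e.le_iff_le

end IccIco

section ExtendIoo

variable {a b c d x : ℝ}

noncomputable def extendIoo (e : Ioo a b ≃o Ioo c d) (x : ℝ) : ℝ :=
  if hx : x ∈ Ioo a b then e ⟨x, hx⟩ else if x ≤ a then x - a + c else x - b + d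

theorem extendIoo_of_mem (e : Ioo a b ≃o Ioo c d) (hx : x ∈ Ioo a b) :
    extendIoo e x = e ⟨x, hx⟩ :=
  dif_pos hx

theorem extendIoo_of_le (e : Ioo a b ≃o Ioo c d) (hx : x ≤ a) : extendIoo e x = x - a + c := by
  rw [extendIoo, dif_neg fun h => h.1.not_ge hx, if_pos hx]

theorem extendIoo_of_ge (hab : a < b) (e : Ioo a b ≃o Ioo c d) (hx : b ≤ x) :
    extendIoo e x = x - b + d := by
  rw [extendIoo, dif_neg fun h => h.2.not_ge hx, if_neg (hab.trans_le hx).not_ge]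

theorem extendIoo_strictMono (hab : a < b) (e : Ioo a b ≃o Ioo c d) :
    StrictMono (extendIoo e) := by
  have hcd : c < d := by
    obtain ⟨m, hm⟩ := nonempty_Ioo.2 hab
    exact (e ⟨m, hm⟩).2.1.trans (e ⟨m, hm⟩).2.2
  intro x y hxy
  rcases le_or_mem_Ioo_or_ge a b x with hx | hx | hx <;>
    rcases le_or_mem_Ioo_or_ge a b y with hy | hy | hy
  · rw [extendIoo_of_le e hx, extendIoo_of_le e hy]; linarith
  · rw [extendIoo_of_le e hx, extendIoo_of_mem e hy]; linarith [(e ⟨y, hy⟩).2.1]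
  · rw [extendIoo_of_le e hx, extendIoo_of_ge hab e hy]; linarith
  · linarith [hx.1]
  · rw [extendIoo_of_mem e hx, extendIoo_of_mem e hy]; exact e.strictMono hxy
  · rw [extendIoo_of_mem e hx, extendIoo_of_ge hab e hy]; linarith [(e ⟨x, hx⟩).2.2]
  · linarith
  · linarith [hy.2]
  · rw [extendIoo_of_ge hab e hx, extendIoo_of_ge hab e hy]; linarith

theorem extendIoo_surjective (hab : a < b) (e : Ioo a b ≃o Ioo c d) :
    Function.Surjective (extendIoo e) := fun y => by
  rcases le_or_mem_Ioo_or_ge c d y with hy | hy | hy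
  · exact ⟨y - c + a, by rw [extendIoo_of_le e (by linarith)]; ring⟩
  · exact ⟨e.symm ⟨y, hy⟩, by rw [extendIoo_of_mem e (e.symm _).2]; simp⟩
  · exact ⟨y - d + b, by rw [extendIoo_of_ge hab e (by linarith)]; ring⟩

theorem extendIoo_notMem_Ioo (hab : a < b) (e : Ioo a b ≃o Ioo c d) (hx : x ∉ Ioo a b) :
    extendIoo e x ∉ Ioo c d := by
  rcases le_or_mem_Ioo_or_ge a b x with h | h | h
  · rw [extendIoo_of_le e h]; exact fun h' => by linarith [h'.1]
  · exact (hx h).elim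
  · rw [extendIoo_of_ge hab e h]; exact fun h' => by linarith [h'.2]

theorem exists_orderIso_extend_Ioo (hab : a < b) (e : Ioo a b ≃o Ioo c d) :
    ∃ H : ℝ ≃o ℝ, (∀ x : Ioo a b, H x = e x) ∧ ∀ x ∉ Ioo a b, H x ∉ Ioo c d :=
  ⟨(extendIoo_strictMono hab e).orderIsoOfSurjective _ (extendIoo_surjective hab e),
    fun x => extendIoo_of_mem e x.2, fun _ hx => extendIoo_notMem_Ioo hab e hx⟩

end ExtendIoo

/-- Let `f, g` be strictly positive order-automorphisms of `ℝ`, each with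
exactly one bump whose supporting interval is bounded above and below (i.e.
the support is nonempty, order-connected, and bounded).  Given
`α ∈ supp f`, `β ∈ supp g` and any order-preserving bijection
`h₀ : [α, α f] → [β, β g]`, there is `h ∈ Aut(ℝ, ≤)` extending `h₀` with
`h⁻¹ f h = g` (equivalently `f h = h g`, i.e. `h (f x) = g (h x)` for all
`x`); in particular `f` and `g` are conjugate. -/
theorem stmt_11 (f g : ℝ ≃o ℝ)
    (hf1 : ∀ x, x ≤ f x) (hg1 : ∀ x, x ≤ g x)
    (hfsupp : {x : ℝ | f x ≠ x}.Nonempty ∧ {x : ℝ | f x ≠ x}.OrdConnected ∧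
      BddAbove {x : ℝ | f x ≠ x} ∧ BddBelow {x : ℝ | f x ≠ x})
    (hgsupp : {x : ℝ | g x ≠ x}.Nonempty ∧ {x : ℝ | g x ≠ x}.OrdConnected ∧
      BddAbove {x : ℝ | g x ≠ x} ∧ BddBelow {x : ℝ | g x ≠ x})
    (α β : ℝ) (hα : f α ≠ α) (hβ : g β ≠ β)
    (h₀ : Set.Icc α (f α) ≃o Set.Icc β (g β)) :
    ∃ h : ℝ ≃o ℝ,
      (∀ x (hx : x ∈ Set.Icc α (f α)), h x = (h₀ ⟨x, hx⟩ : ℝ)) ∧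
      (∀ x, h (f x) = g (h x)) := by
  obtain ⟨hfne, hfc, hfa, hfb⟩ := hfsupp
  obtain ⟨hgne, hgc, hga, hgb⟩ := hgsupp
  have hSf := f.setOf_apply_ne_eq_Ioo hfne hfc hfa hfb
  have hSg := g.setOf_apply_ne_eq_Ioo hgne hgc hga hgb
  set a := sInf {x | f x ≠ x}
  set b := sSup {x | f x ≠ x}
  have hαI := (Set.ext_iff.1 hSf α).1 hα
  have hαf : α < f α := (hf1 α).lt_of_ne' hα
  have hfI : ∀ x ∈ Ioo a b, f x ∈ Ioo a b := fun x hx => by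
    simpa using f.zpow_apply_mem_Ioo hSf 1 hx
  obtain ⟨e, he_conj, he_ext⟩ := exists_orderIso_conj_of_range_orbitLex hαf
    ((hg1 β).lt_of_ne' hβ) (h₀.restrictIco hαf.le) (range_orbitLex_eq_Ioo hf1 hSf hαI)
    (range_orbitLex_eq_Ioo hg1 hSg ((Set.ext_iff.1 hSg β).1 hβ))
  obtain ⟨H, hHe, hHout⟩ := exists_orderIso_extend_Ioo (hαI.1.trans hαI.2) e
  have hconj : ∀ x, H (f x) = g (H x) := fun x => by
    by_cases hx : x ∈ Ioo a b
    · exact (hHe ⟨f x, hfI x hx⟩).trans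
        ((he_conj ⟨x, hx⟩ _).trans (congrArg g (hHe ⟨x, hx⟩).symm))
    · rw [f.apply_eq_self_of_notMem_Ioo hSf hx, g.apply_eq_self_of_notMem_Ioo hSg (hHout x hx)]
  refine ⟨H, fun x hx => ?_, hconj⟩
  rcases hx.2.lt_or_eq with hlt | rfl
  · have hxI : x ∈ Ioo a b := ⟨hαI.1.trans_le hx.1, hlt.trans (hfI α hαI).2⟩
    exact (hHe ⟨x, hxI⟩).trans (he_ext ⟨x, hx.1, hlt⟩ hxI)
  · rw [hconj, (hHe ⟨α, hαI⟩).trans (he_ext ⟨α, le_rfl, hαf⟩ hαI)]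
    exact (congrArg g (h₀.Icc_apply_left hαf.le)).trans (h₀.Icc_apply_right hαf.le).symm
end
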